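/- Let l ≥ 1, τ ∈ ℝ, and α > 0 with 2c₂α/l < 1. Then, under the product Gibbs measure λ_τ^{⊗l} on ℝ^l, the block average of V' satisfies ∫_{ℝ^l} exp(α ((1/l) Σ_{j=1}^l V'(r_j) − τ)²) dλ_τ^{⊗l}(r_1,…,r_l) ≤ (1 − 2c₂α/l)^{−1/2}. -/

import Mathlib

/-!
Under `λ_τ` the variable `V'(r) - τ` is sub-Gaussian with variance proxy `c₂`: because
`V'' ≤ c₂`, the Taylor bound `V (r - t) ≤ V r - t V'(r) + c₂ t² / 2` shows that tilting the
density by `exp (t (V' - τ))` is dominated by translating it by `t`, at the cost of a factor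
`exp (c₂ t² / 2)`. The block average of `l` independent copies is then sub-Gaussian with proxy
`c₂ / l`. Finally, for `X` sub-Gaussian with proxy `c`, write `exp (α X²)` as the average of
`exp (√(2α) X t)` over a standard Gaussian `t` (Hubbard–Stratonovich); exchanging the integrals,
`E exp (α X²) ≤ E_t exp (c α t²) = (1 - 2 c α)^(-1/2)`.
-/

open MeasureTheory Real Finset

/-- The Gibbs function `G(τ) = log ∫ exp(τ r - V(r)) dr`. -/
noncomputable def gibbsG (V : ℝ → ℝ) (τ : ℝ) : ℝ :=
  Real.log (∫ r : ℝ, Real.exp (τ * r - V r))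

/-- The Gibbs probability measure `λ_τ` with density `exp(τ r - V(r) - G(τ))`
with respect to Lebesgue measure. -/
noncomputable def gibbsMeasure (V : ℝ → ℝ) (τ : ℝ) : Measure ℝ :=
  (volume : Measure ℝ).withDensity
    (fun r => ENNReal.ofReal (Real.exp (τ * r - V r - gibbsG V τ)))

open ProbabilityTheory
open scoped NNReal

lemma Monotone.add_mul_sub_le_of_hasDerivAt {f f' : ℝ → ℝ} (hf' : Monotone f')
    (hf : ∀ x, HasDerivAt f (f' x) x) (x y : ℝ) : f x + f' x * (y - x) ≤ f y := by
  have hcont : Continuous f := continuous_iff_continuousAt.2 fun z => (hf z).continuousAt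
  rcases lt_trichotomy x y with hxy | rfl | hxy
  · obtain ⟨z, hz, hslope⟩ := exists_hasDerivAt_eq_slope f f' hxy hcont.continuousOn
      (fun z _ => hf z)
    rw [eq_div_iff (sub_ne_zero.2 hxy.ne')] at hslope
    nlinarith [hf' hz.1.le]
  · simp
  · obtain ⟨z, hz, hslope⟩ := exists_hasDerivAt_eq_slope f f' hxy hcont.continuousOn
      (fun z _ => hf z)
    rw [eq_div_iff (sub_ne_zero.2 hxy.ne')] at hslope
    nlinarith [hf' hz.2.le]

section Taylor

variable {f : ℝ → ℝ} {c : ℝ}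

lemma add_deriv_mul_add_sq_le_of_le_deriv_deriv (hf : ContDiff ℝ 2 f)
    (hc : ∀ x, c ≤ deriv (deriv f) x) (x y : ℝ) :
    f x + deriv f x * (y - x) + c / 2 * (y - x) ^ 2 ≤ f y := by
  have hf₁ := hf.differentiable two_ne_zero
  have hf₂ := hf.differentiable_deriv_two
  have hg (u : ℝ) :
      HasDerivAt (fun u => f u - c / 2 * (u - x) ^ 2) (deriv f u - c * (u - x)) u := by
    have := (hf₁ u).hasDerivAt.sub (((hasDerivAt_id' u).sub_const x).pow 2 |>.const_mul (c / 2))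
    refine this.congr_deriv ?_
    simp only [Nat.cast_ofNat, Nat.add_one_sub_one, pow_one, mul_one]
    ring
  have hg' (u : ℝ) :
      HasDerivAt (fun u => deriv f u - c * (u - x)) (deriv (deriv f) u - c) u := by
    have := (hf₂ u).hasDerivAt.sub (((hasDerivAt_id' u).sub_const x).const_mul c)
    exact this.congr_deriv (by ring)
  have hmono : Monotone fun u => deriv f u - c * (u - x) :=
    monotone_of_deriv_nonneg (fun u => (hg' u).differentiableAt)
      fun u => (hg' u).deriv ▸ sub_nonneg.2 (hc u)
  have := hmono.add_mul_sub_le_of_hasDerivAt hg x y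
  simp only [sub_self, mul_zero, sub_zero] at this
  nlinarith

lemma le_add_deriv_mul_add_sq_of_deriv_deriv_le (hf : ContDiff ℝ 2 f)
    (hc : ∀ x, deriv (deriv f) x ≤ c) (x y : ℝ) :
    f y ≤ f x + deriv f x * (y - x) + c / 2 * (y - x) ^ 2 := by
  have hneg : ∀ x, -c ≤ deriv (deriv (-f)) x := fun x => by
    simpa [deriv.neg'] using hc x
  have := add_deriv_mul_add_sq_le_of_le_deriv_deriv hf.neg hneg x y
  simp only [deriv.fun_neg] at this
  linarith

end Taylor

lemma lintegral_exp_mul_gaussianReal (s : ℝ) :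
    ∫⁻ t, ENNReal.ofReal (exp (s * t)) ∂gaussianReal 0 1 = ENNReal.ofReal (exp (s ^ 2 / 2)) := by
  rw [← ofReal_integral_eq_lintegral_ofReal (integrable_exp_mul_gaussianReal s)
    (ae_of_all _ fun t => (exp_pos _).le)]
  congr 1
  simpa [mgf] using congrFun (mgf_id_gaussianReal (μ := 0) (v := 1)) s

lemma lintegral_exp_mul_sq_gaussianReal {β : ℝ} (hβ : β < 1) :
    ∫⁻ t, ENNReal.ofReal (exp (β * t ^ 2 / 2)) ∂gaussianReal 0 1 =
      ENNReal.ofReal ((1 - β) ^ (-(1 : ℝ) / 2)) := by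
  have hβ' : 0 < (1 - β) / 2 := by linarith
  have hdensity (t : ℝ) : gaussianPDFReal 0 1 t * exp (β * t ^ 2 / 2) =
      (√(2 * π))⁻¹ * exp (-((1 - β) / 2) * t ^ 2) := by
    rw [gaussianPDFReal_def, mul_assoc, ← exp_add]
    push_cast
    ring_nf
  rw [gaussianReal_of_var_ne_zero _ one_ne_zero,
    lintegral_withDensity_eq_lintegral_mul _ (measurable_gaussianPDF 0 1) (by fun_prop)]
  simp only [Pi.mul_apply, gaussianPDF, ← ENNReal.ofReal_mul (gaussianPDFReal_nonneg _ _ _),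
    hdensity]
  rw [← ofReal_integral_eq_lintegral_ofReal ((integrable_exp_neg_mul_sq hβ').const_mul _)
    (ae_of_all _ fun t => by positivity), integral_const_mul, integral_gaussian]
  congr 1
  have h1 : 0 < 1 - β := by linarith
  rw [show π / ((1 - β) / 2) = (2 * π) * (1 - β)⁻¹ by field_simp,
    Real.sqrt_mul (by positivity : (0 : ℝ) ≤ 2 * π), ← mul_assoc, inv_mul_cancel₀ (by positivity),
    one_mul, Real.sqrt_inv, Real.sqrt_eq_rpow, ← rpow_neg h1.le]
  norm_num

namespace ProbabilityTheory.HasSubgaussianMGF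

variable {Ω : Type*} {mΩ : MeasurableSpace Ω} {μ : Measure Ω} {X : Ω → ℝ} {c : ℝ≥0}

lemma of_lintegral_le (hX : AEMeasurable X μ)
    (h : ∀ t, ∫⁻ ω, ENNReal.ofReal (exp (t * X ω)) ∂μ ≤ ENNReal.ofReal (exp (c * t ^ 2 / 2))) :
    HasSubgaussianMGF X c μ := by
  have hmeas (t : ℝ) : AEStronglyMeasurable (fun ω => exp (t * X ω)) μ :=
    (measurable_exp.comp_aemeasurable (hX.const_mul t)).aestronglyMeasurable
  refine ⟨fun t => ?_, fun t => ?_⟩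
  · exact (lintegral_ofReal_ne_top_iff_integrable (hmeas t)
      (ae_of_all _ fun ω => (exp_pos _).le)).1 (ne_top_of_le_ne_top ENNReal.ofReal_ne_top (h t))
  · rw [mgf, integral_eq_lintegral_of_nonneg_ae (ae_of_all _ fun ω => (exp_pos _).le) (hmeas t)]
    exact ENNReal.toReal_le_of_le_ofReal (exp_pos _).le (h t)

lemma sum_pi {ι : Type*} [Fintype ι] [IsProbabilityMeasure μ] (h : HasSubgaussianMGF X c μ) :
    HasSubgaussianMGF (fun x : ι → Ω => ∑ i, X (x i)) (Fintype.card ι * c)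
      (Measure.pi fun _ => μ) := by
  have hcoord (i : ι) : HasSubgaussianMGF (fun x : ι → Ω => X (x i)) c (Measure.pi fun _ => μ) :=
    of_map (measurable_pi_apply i).aemeasurable (by rwa [(measurePreserving_eval _ i).map_eq])
  simpa using sum_of_iIndepFun (iIndepFun_pi fun _ => h.aemeasurable) (s := Finset.univ)
    fun i _ => hcoord i

lemma average_pi {ι : Type*} [Fintype ι] [Nonempty ι] [IsProbabilityMeasure μ]
    (h : HasSubgaussianMGF X c μ) :
    HasSubgaussianMGF (fun x : ι → Ω => (Fintype.card ι : ℝ)⁻¹ * ∑ i, X (x i))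
      (c / Fintype.card ι) (Measure.pi fun _ => μ) := by
  convert h.sum_pi.const_mul (Fintype.card ι : ℝ)⁻¹ using 1
  ext
  change (c / Fintype.card ι : ℝ) = (Fintype.card ι : ℝ)⁻¹ ^ 2 * (Fintype.card ι * c)
  field_simp

lemma lintegral_exp_mul_sq_le (h : HasSubgaussianMGF X c μ) {α : ℝ} (hα : 0 ≤ α)
    (hαc : 2 * c * α < 1) :
    ∫⁻ ω, ENNReal.ofReal (exp (α * X ω ^ 2)) ∂μ ≤
      ENNReal.ofReal ((1 - 2 * c * α) ^ (-(1 : ℝ) / 2)) := by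
  have : IsFiniteMeasure μ :=
    (integrable_const_iff.1 (by simpa using h.integrable_exp_mul 0)).resolve_left one_ne_zero
  set a := √(2 * α)
  have ha : a ^ 2 = 2 * α := sq_sqrt (by linarith)
  calc ∫⁻ ω, ENNReal.ofReal (exp (α * X ω ^ 2)) ∂μ
      = ∫⁻ ω, ∫⁻ t, ENNReal.ofReal (exp (a * X ω * t)) ∂gaussianReal 0 1 ∂μ := by
        refine lintegral_congr fun ω => ?_
        rw [lintegral_exp_mul_gaussianReal, mul_pow, ha]
        ring_nf
    _ = ∫⁻ t, ∫⁻ ω, ENNReal.ofReal (exp (a * t * X ω)) ∂μ ∂gaussianReal 0 1 := by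
        have hmeas : AEMeasurable
            (Function.uncurry fun ω t => ENNReal.ofReal (exp (a * X ω * t)))
            (μ.prod (gaussianReal 0 1)) :=
          ENNReal.measurable_ofReal.comp_aemeasurable (measurable_exp.comp_aemeasurable
            ((h.aemeasurable.comp_fst.const_mul a).mul measurable_snd.aemeasurable))
        rw [lintegral_lintegral_swap hmeas]
        simp only [mul_right_comm a]
    _ = ∫⁻ t, ENNReal.ofReal (mgf X μ (a * t)) ∂gaussianReal 0 1 := by
        refine lintegral_congr fun t => ?_
        exact (ofReal_integral_eq_lintegral_ofReal (h.integrable_exp_mul _)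
          (ae_of_all _ fun ω => (exp_pos _).le)).symm
    _ ≤ ∫⁻ t, ENNReal.ofReal (exp (2 * c * α * t ^ 2 / 2)) ∂gaussianReal 0 1 := by
        gcongr with t
        refine (h.mgf_le _).trans_eq ?_
        rw [mul_pow, ha]
        ring_nf
    _ = ENNReal.ofReal ((1 - 2 * c * α) ^ (-(1 : ℝ) / 2)) :=
        lintegral_exp_mul_sq_gaussianReal hαc

lemma integral_exp_mul_sq_le (h : HasSubgaussianMGF X c μ) {α : ℝ} (hα : 0 ≤ α)
    (hαc : 2 * c * α < 1) :
    ∫ ω, exp (α * X ω ^ 2) ∂μ ≤ (1 - 2 * c * α) ^ (-(1 : ℝ) / 2) := by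
  rw [integral_eq_lintegral_of_nonneg_ae (ae_of_all _ fun ω => (exp_pos _).le)
    (measurable_exp.comp_aemeasurable
      ((h.aemeasurable.pow_const 2).const_mul α)).aestronglyMeasurable]
  exact ENNReal.toReal_le_of_le_ofReal (by positivity) (h.lintegral_exp_mul_sq_le hα hαc)

end ProbabilityTheory.HasSubgaussianMGF

section Gibbs

variable {V : ℝ → ℝ} {c₁ c₂ : ℝ}

lemma integrable_exp_mul_sub_of_le_deriv_deriv (hc₁ : 0 < c₁) (hV : ContDiff ℝ 2 V)
    (hlow : ∀ r, c₁ ≤ deriv (deriv V) r) (τ : ℝ) :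
    Integrable fun r => exp (τ * r - V r) := by
  set m := (τ - deriv V 0) / c₁
  have hbound (r : ℝ) :
      exp (τ * r - V r) ≤ exp (c₁ / 2 * m ^ 2 - V 0) * exp (-(c₁ / 2) * (r - m) ^ 2) := by
    rw [← exp_add, exp_le_exp]
    have hquad := add_deriv_mul_add_sq_le_of_le_deriv_deriv hV hlow 0 r
    have hm : c₁ * m = τ - deriv V 0 := mul_div_cancel₀ _ hc₁.ne'
    nlinarith [congrArg (· * r) hm]
  have hgauss := (integrable_exp_neg_mul_sq (half_pos hc₁)).comp_sub_right m
  refine (hgauss.const_mul (exp (c₁ / 2 * m ^ 2 - V 0))).mono'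
    (by have := hV.continuous; fun_prop) (ae_of_all _ fun r => ?_)
  rw [norm_of_nonneg (exp_pos _).le]
  exact hbound r

lemma isProbabilityMeasure_gibbsMeasure (hc₁ : 0 < c₁) (hV : ContDiff ℝ 2 V)
    (hlow : ∀ r, c₁ ≤ deriv (deriv V) r) (τ : ℝ) :
    IsProbabilityMeasure (gibbsMeasure V τ) := by
  have hint := integrable_exp_mul_sub_of_le_deriv_deriv hc₁ hV hlow τ
  constructor
  simp_rw [gibbsMeasure, withDensity_apply _ MeasurableSet.univ, Measure.restrict_univ,
    exp_sub _ (gibbsG V τ)]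
  rw [← ofReal_integral_eq_lintegral_ofReal (hint.div_const _)
      (ae_of_all _ fun r => by positivity), integral_div, gibbsG, exp_log (integral_exp_pos hint),
    div_self (integral_exp_pos hint).ne', ENNReal.ofReal_one]

lemma lintegral_exp_mul_deriv_sub_le (hc₁ : 0 < c₁) (hV : ContDiff ℝ 2 V)
    (hlow : ∀ r, c₁ ≤ deriv (deriv V) r) (hhigh : ∀ r, deriv (deriv V) r ≤ c₂) (τ t : ℝ) :
    ∫⁻ r, ENNReal.ofReal (exp (t * (deriv V r - τ))) ∂gibbsMeasure V τ ≤
      ENNReal.ofReal (exp (c₂ * t ^ 2 / 2)) := by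
  have := isProbabilityMeasure_gibbsMeasure hc₁ hV hlow τ
  have hVc := hV.continuous
  have hV'c := hV.continuous_deriv one_le_two
  set density := fun r => ENNReal.ofReal (exp (τ * r - V r - gibbsG V τ))
  have hshift (r : ℝ) : density r * ENNReal.ofReal (exp (t * (deriv V r - τ))) ≤
      ENNReal.ofReal (exp (c₂ * t ^ 2 / 2)) * density (r - t) := by
    simp only [density, ← ENNReal.ofReal_mul (exp_pos _).le, ← exp_add]
    refine ENNReal.ofReal_le_ofReal (exp_le_exp.2 ?_)
    nlinarith [le_add_deriv_mul_add_sq_of_deriv_deriv_le hV hhigh r (r - t)]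
  calc ∫⁻ r, ENNReal.ofReal (exp (t * (deriv V r - τ))) ∂gibbsMeasure V τ
      = ∫⁻ r, density r * ENNReal.ofReal (exp (t * (deriv V r - τ))) :=
        lintegral_withDensity_eq_lintegral_mul _ (by fun_prop) (by fun_prop)
    _ ≤ ∫⁻ r, ENNReal.ofReal (exp (c₂ * t ^ 2 / 2)) * density (r - t) := lintegral_mono hshift
    _ = ENNReal.ofReal (exp (c₂ * t ^ 2 / 2)) * gibbsMeasure V τ Set.univ := by
        rw [lintegral_const_mul' _ _ ENNReal.ofReal_ne_top, lintegral_sub_right_eq_self density t,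
          gibbsMeasure, withDensity_apply _ MeasurableSet.univ, Measure.restrict_univ]
    _ = ENNReal.ofReal (exp (c₂ * t ^ 2 / 2)) := by rw [measure_univ, mul_one]

lemma hasSubgaussianMGF_deriv_sub_gibbsMeasure (hc₁ : 0 < c₁) (hV : ContDiff ℝ 2 V)
    (hlow : ∀ r, c₁ ≤ deriv (deriv V) r) (hhigh : ∀ r, deriv (deriv V) r ≤ c₂) (τ : ℝ) :
    HasSubgaussianMGF (fun r => deriv V r - τ) c₂.toNNReal (gibbsMeasure V τ) := by
  have hc₂ : 0 ≤ c₂ := by linarith [hlow 0, hhigh 0]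
  refine .of_lintegral_le ((hV.continuous_deriv one_le_two).measurable.sub_const τ).aemeasurable
    fun t => ?_
  rw [Real.coe_toNNReal _ hc₂]
  exact lintegral_exp_mul_deriv_sub_le hc₁ hV hlow hhigh τ t

end Gibbs

/-- for `l ≥ 1`, `τ ∈ ℝ` and `α > 0` with `2c₂α/l < 1`, the block average
of `V'` under the `l`-fold product Gibbs measure satisfies
`∫ exp(α ((1/l) Σ_j V'(r_j) - τ)²) dλ_τ^{⊗l} ≤ (1 - 2c₂α/l)^{-1/2}`. -/
theorem product_gibbs_block_average_exp_square_bound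
    (V : ℝ → ℝ) (c₁ c₂ : ℝ) (hc₁ : 0 < c₁)
    (hV : ContDiff ℝ 2 V)
    (hlow : ∀ r : ℝ, c₁ ≤ deriv (deriv V) r)
    (hhigh : ∀ r : ℝ, deriv (deriv V) r ≤ c₂)
    (l : ℕ) (hl : 1 ≤ l) (τ α : ℝ) (hα : 0 < α)
    (hsmall : 2 * c₂ * α / l < 1) :
    (∫ x : Fin l → ℝ,
        Real.exp (α * ((1 / (l : ℝ)) * ∑ j : Fin l, deriv V (x j) - τ) ^ 2)
      ∂(Measure.pi fun _ : Fin l => gibbsMeasure V τ))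
      ≤ (1 - 2 * c₂ * α / l) ^ (-(1:ℝ) / 2) := by
  have hprob := isProbabilityMeasure_gibbsMeasure hc₁ hV hlow τ
  have hl₀ : (l : ℝ) ≠ 0 := by positivity
  have hc₂ : 0 ≤ c₂ := by linarith [hlow 0, hhigh 0]
  have hne : Nonempty (Fin l) := ⟨⟨0, hl⟩⟩
  have hsub := (hasSubgaussianMGF_deriv_sub_gibbsMeasure hc₁ hV hlow hhigh τ).average_pi
    (ι := Fin l)
  have hconst : 2 * ((c₂.toNNReal / Fintype.card (Fin l) : ℝ≥0) : ℝ) * α = 2 * c₂ * α / l := by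
    rw [NNReal.coe_div, Real.coe_toNNReal _ hc₂, Fintype.card_fin, NNReal.coe_natCast]
    ring
  have hS (x : Fin l → ℝ) : (Fintype.card (Fin l) : ℝ)⁻¹ * ∑ j, (deriv V (x j) - τ) =
      1 / (l : ℝ) * ∑ j, deriv V (x j) - τ := by
    rw [Finset.sum_sub_distrib, Finset.sum_const, Finset.card_univ, Fintype.card_fin, nsmul_eq_mul]
    field_simp
  simpa only [hS, hconst] using hsub.integral_exp_mul_sq_le hα.le (hconst ▸ hsmall)
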